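/- Let X ⊆ ℝⁿ be compact and nonempty, f_ℓ : X → ℝ continuous for ℓ = 1,…,r, u* ∈ ℝʳ a utopian vector (u*_ℓ < f_ℓ(x) for all x ∈ X, all ℓ). If x̄ ∈ X is a weak Pareto optimal solution of min_{x∈X} (f₁(x),…,f_r(x)), then there exists w ∈ ℝʳ with w_ℓ > 0 for all ℓ and ∑ w_ℓ = 1 such that x̄ minimizes Ψ_w(x) = max_ℓ w_ℓ(f_ℓ(x) − u*_ℓ) over X. In particular one may take w_ℓ = (f_ℓ(x̄) − u*_ℓ)⁻¹ / ∑_j (f_j(x̄) − u*_j)⁻¹. -/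

import Mathlib

/-!
With `d ℓ = f ℓ x̄ - u ℓ > 0`, the weights `w ℓ ∝ (d ℓ)⁻¹` equalize all weighted deviations at `x̄`,
so `Ψ_w(x̄) = w ℓ * d ℓ` for every `ℓ`. Weak Pareto optimality gives, for each `x ∈ X`, some `ℓ`
with `f ℓ x̄ ≤ f ℓ x`, and that single component already yields `Ψ_w(x̄) ≤ Ψ_w(x)`.
-/

section InverseWeights

variable {ι : Type*} [Fintype ι]

noncomputable def inverseWeights (d : ι → ℝ) (i : ι) : ℝ :=
  (d i)⁻¹ / ∑ j, (d j)⁻¹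

variable {d : ι → ℝ}

lemma sum_inv_pos [Nonempty ι] (hd : ∀ i, 0 < d i) : 0 < ∑ j, (d j)⁻¹ :=
  Finset.sum_pos (fun i _ => inv_pos.mpr (hd i)) Finset.univ_nonempty

lemma inverseWeights_pos [Nonempty ι] (hd : ∀ i, 0 < d i) (i : ι) : 0 < inverseWeights d i :=
  div_pos (inv_pos.mpr (hd i)) (sum_inv_pos hd)

lemma sum_inverseWeights [Nonempty ι] (hd : ∀ i, 0 < d i) : ∑ i, inverseWeights d i = 1 := by
  simp only [inverseWeights]
  rw [← Finset.sum_div, div_self (sum_inv_pos hd).ne']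

lemma inverseWeights_mul_self (hd : ∀ i, d i ≠ 0) (i : ι) :
    inverseWeights d i * d i = (∑ j, (d j)⁻¹)⁻¹ := by
  rw [inverseWeights, div_mul_eq_mul_div, inv_mul_cancel₀ (hd i), one_div]

end InverseWeights

lemma iSup_mul_le_iSup_mul_of_exists_le {ι : Type*} [Finite ι] {w a b : ι → ℝ} {c : ℝ}
    (hw : ∀ i, 0 ≤ w i) (hwa : ∀ i, w i * a i = c) (hab : ∃ i, a i ≤ b i) :
    ⨆ i, w i * a i ≤ ⨆ i, w i * b i := by
  obtain ⟨i, hi⟩ := hab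
  have : Nonempty ι := ⟨i⟩
  calc ⨆ i, w i * a i = w i * a i := by simp only [hwa, ciSup_const]
    _ ≤ w i * b i := mul_le_mul_of_nonneg_left hi (hw i)
    _ ≤ ⨆ i, w i * b i := le_ciSup (Set.finite_range fun i => w i * b i).bddAbove i

theorem weak_pareto_chebyshev_general (n r : ℕ) (hr : 0 < r) (X : Set (Fin n → ℝ))
    (f : Fin r → (Fin n → ℝ) → ℝ)
    (u : Fin r → ℝ) (hu : ∀ ℓ, ∀ x ∈ X, u ℓ < f ℓ x)
    (xbar : Fin n → ℝ) (hxbar : xbar ∈ X)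
    (hwp : ¬ ∃ x ∈ X, ∀ ℓ, f ℓ x < f ℓ xbar) :
    ∃ w : Fin r → ℝ, (∀ ℓ, 0 < w ℓ) ∧ (∑ ℓ, w ℓ = 1) ∧
      (∀ x ∈ X, (⨆ ℓ, w ℓ * (f ℓ xbar - u ℓ)) ≤ ⨆ ℓ, w ℓ * (f ℓ x - u ℓ)) ∧
      w = fun ℓ => (f ℓ xbar - u ℓ)⁻¹ / ∑ j, (f j xbar - u j)⁻¹ := by
  have : Nonempty (Fin r) := Fin.pos_iff_nonempty.mp hr
  have hd : ∀ ℓ, 0 < f ℓ xbar - u ℓ := fun ℓ => sub_pos.mpr (hu ℓ xbar hxbar)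
  refine ⟨inverseWeights fun ℓ => f ℓ xbar - u ℓ, inverseWeights_pos hd, sum_inverseWeights hd,
    fun x hx => ?_, rfl⟩
  obtain ⟨ℓ, hℓ⟩ : ∃ ℓ, f ℓ xbar ≤ f ℓ x := by
    push Not at hwp
    exact hwp x hx
  exact iSup_mul_le_iSup_mul_of_exists_le (fun ℓ => (inverseWeights_pos hd ℓ).le)
    (inverseWeights_mul_self fun ℓ => (hd ℓ).ne') ⟨ℓ, sub_le_sub_right hℓ _⟩

/-- Every weak Pareto optimal solution minimizes some weighted Chebyshev
scalarization with strictly positive weights summing to 1; one may take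
`w ℓ = (f ℓ x̄ - u ℓ)⁻¹ / ∑ⱼ (f j x̄ - u j)⁻¹`. -/
theorem weak_pareto_chebyshev (n r : ℕ) (hr : 0 < r) (X : Set (Fin n → ℝ))
    (hXc : IsCompact X) (hX : X.Nonempty)
    (f : Fin r → (Fin n → ℝ) → ℝ) (hf : ∀ ℓ, ContinuousOn (f ℓ) X)
    (u : Fin r → ℝ) (hu : ∀ ℓ, ∀ x ∈ X, u ℓ < f ℓ x)
    (xbar : Fin n → ℝ) (hxbar : xbar ∈ X)
    (hwp : ¬ ∃ x ∈ X, ∀ ℓ, f ℓ x < f ℓ xbar) :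
    ∃ w : Fin r → ℝ, (∀ ℓ, 0 < w ℓ) ∧ (∑ ℓ, w ℓ = 1) ∧
      (∀ x ∈ X, (⨆ ℓ, w ℓ * (f ℓ xbar - u ℓ)) ≤ ⨆ ℓ, w ℓ * (f ℓ x - u ℓ)) ∧
      w = fun ℓ => (f ℓ xbar - u ℓ)⁻¹ / ∑ j, (f j xbar - u j)⁻¹ :=
  weak_pareto_chebyshev_general n r hr X f u hu xbar hxbar hwp
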